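/- arXiv:1902.08340 — 2 statements merged into one kernel-verified Lean document; each statement's English description precedes it below -/
import Mathlib

section
/- Let n ≥ 1 be an integer and let t, y ∈ ℝⁿ satisfy ‖t‖ = 1 and ‖t − y‖² ≤ 1 − 4/n². Then ⟨y, t⟩ ≥ 0, and for every β > 0 and every real number k with β/2 ≤ k ≤ β, one has ‖βt − ky‖² ≤ (1 − 1/n²) · ‖βt‖². -/
open Real
open scoped RealInnerProductSpace

/-- The computation in footnote 2 of the paper: if `‖t‖ = 1` and `‖t − y‖² ≤ 1 − 4/n²`, then
`⟨y, t⟩ ≥ 0` and for any `β > 0` and `β/2 ≤ k ≤ β`,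
`‖βt − ky‖² ≤ (1 − 1/n²)·‖βt‖²`. -/
theorem footnote_computation (n : ℕ) (hn : 1 ≤ n)
    (t y : EuclideanSpace ℝ (Fin n)) (ht : ‖t‖ = 1)
    (hty : ‖t - y‖ ^ 2 ≤ 1 - 4 / (n : ℝ) ^ 2) :
    0 ≤ ⟪y, t⟫ ∧
      ∀ β k : ℝ, 0 < β → β / 2 ≤ k → k ≤ β →
        ‖β • t - k • y‖ ^ 2 ≤ (1 - 1 / (n : ℝ) ^ 2) * ‖β • t‖ ^ 2 := by
  have hn1 : (1:ℝ) ≤ (n:ℝ) := by exact_mod_cast hn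
  have hn2 : (0:ℝ) < (n:ℝ)^2 := by positivity
  have h1 : ‖t - y‖ ^ 2 = ‖t‖^2 - 2*⟪t,y⟫ + ‖y‖^2 := by
    rw [@norm_sub_sq_real]
  have hyt : ⟪y,t⟫ = ⟪t,y⟫ := real_inner_comm t y
  have key : ‖y‖^2 + 4/(n:ℝ)^2 ≤ 2*⟪t,y⟫ := by
    rw [h1, ht] at hty; linarith
  have h4 : (0:ℝ) ≤ 4/(n:ℝ)^2 := by positivity
  have key' : ‖y‖^2 * (n:ℝ)^2 + 4 ≤ 2*⟪t,y⟫*(n:ℝ)^2 := by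
    have := mul_le_mul_of_nonneg_right key hn2.le
    rw [add_mul, div_mul_cancel₀ _ hn2.ne'] at this
    linarith
  refine ⟨by rw [hyt]; nlinarith [sq_nonneg ‖y‖], ?_⟩
  intro β k hβ hk1 hk2
  have hk0 : 0 < k := by linarith
  have e2 : ‖β • t - k • y‖^2 = β^2*‖t‖^2 - 2*(β*k)*⟪t,y⟫ + k^2*‖y‖^2 := by
    rw [@norm_sub_sq_real, real_inner_smul_left, real_inner_smul_right,
      norm_smul, norm_smul]
    simp [mul_pow, sq_abs]
    ring
  have e3 : ‖β • t‖^2 = β^2 := by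
    rw [norm_smul, ht]; simp [sq_abs]
  rw [e2, e3, ht]
  have h : β ^ 2 ≤ (2 * (β*k) * ⟪t,y⟫ - k^2 * ‖y‖^2) * (n:ℝ)^2 := by
    nlinarith [mul_le_mul_of_nonneg_left key' (mul_pos hβ hk0).le,
      mul_nonneg (mul_nonneg (mul_nonneg hk0.le (by linarith : (0:ℝ) ≤ β - k))
        (sq_nonneg ‖y‖)) hn2.le]
  have h2 : β^2 / (n:ℝ)^2 ≤ 2 * (β*k) * ⟪t,y⟫ - k^2 * ‖y‖^2 := (div_le_iff₀ hn2).mpr h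
  have h3 : (1 - 1/(n:ℝ)^2) * β^2 = β^2 * 1^2 - β^2/(n:ℝ)^2 := by field_simp
  linarith
end

section
/- Let n ≥ 1 be an integer and let t, y ∈ ℝⁿ satisfy ‖t‖ ≥ 1 and ‖t/‖t‖ − y‖² ≤ 1 − 4/n². Then there exists an integer k with ‖t − k·y‖² ≤ (1 − 1/n²) · ‖t‖². -/
/-!
Write `T = ‖t‖`, `A = ⟪t, y⟫` and `β = ‖y‖²`. The hypothesis on the unit vector `t / T` says exactly
`T (β + c) ≤ 2A`, so `t` has a large component along `y`. Rounding the coefficient `A / β` of the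
orthogonal projection of `t` onto `ℝ y` to the nearest integer `k` costs at most `β / 4`, whence
`‖t - k y‖² ≤ T² - A² / β + β / 4`, and `4A² ≥ T² (β + c)² ≥ β² + c T² β` (using `T ≥ 1`) gives the bound.
-/

open RealInnerProductSpace

variable {E : Type*} [NormedAddCommGroup E] [InnerProductSpace ℝ E]

theorem norm_inv_norm_smul_sub_sq {t : E} (ht : t ≠ 0) (y : E) :
    ‖‖t‖⁻¹ • t - y‖ ^ 2 = 1 - 2 * (⟪t, y⟫ / ‖t‖) + ‖y‖ ^ 2 := by
  rw [norm_sub_sq_real, norm_smul, norm_inv, norm_norm, inv_mul_cancel₀ (norm_ne_zero_iff.mpr ht),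
    real_inner_smul_left]
  ring

theorem exists_int_norm_sub_smul_sq_le (t : E) {y : E} (hy : y ≠ 0) :
    ∃ k : ℤ, ‖t - (k : ℝ) • y‖ ^ 2 ≤ ‖t‖ ^ 2 - ⟪t, y⟫ ^ 2 / ‖y‖ ^ 2 + ‖y‖ ^ 2 / 4 := by
  have hβ : 0 < ‖y‖ ^ 2 := by positivity
  set s := ⟪t, y⟫ / ‖y‖ ^ 2
  refine ⟨round s, ?_⟩
  have hround : (s - round s) ^ 2 ≤ 1 / 4 := by
    nlinarith [abs_sub_round s, sq_abs (s - round s), abs_nonneg (s - round s)]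
  -- completing the square around the projection coefficient `s`
  have hexpand : ‖t - (round s : ℝ) • y‖ ^ 2
      = ‖t‖ ^ 2 - ⟪t, y⟫ ^ 2 / ‖y‖ ^ 2 + ‖y‖ ^ 2 * (s - round s) ^ 2 := by
    rw [norm_sub_sq_real, real_inner_smul_right, norm_smul, Real.norm_eq_abs, mul_pow, sq_abs]
    simp only [s]
    field_simp
    ring
  rw [hexpand]
  nlinarith

theorem exists_int_norm_sub_smul_sq_le_of_norm_inv_norm_smul_sub_sq_le {t y : E} {c : ℝ}
    (hc : 0 ≤ c) (ht : 1 ≤ ‖t‖) (hty : ‖‖t‖⁻¹ • t - y‖ ^ 2 ≤ 1 - c) :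
    ∃ k : ℤ, ‖t - (k : ℝ) • y‖ ^ 2 ≤ (1 - c / 4) * ‖t‖ ^ 2 := by
  have hT : 0 < ‖t‖ := one_pos.trans_le ht
  rw [norm_inv_norm_smul_sub_sq (norm_pos_iff.mp hT)] at hty
  rcases eq_or_ne y 0 with rfl | hy
  · refine ⟨0, ?_⟩
    simp only [inner_zero_right, norm_zero, zero_div, mul_zero, sub_zero] at hty
    have hc0 : c = 0 := by linarith
    simp [hc0]
  obtain ⟨k, hk⟩ := exists_int_norm_sub_smul_sq_le t hy
  refine ⟨k, hk.trans ?_⟩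
  have hβ : 0 < ‖y‖ ^ 2 := by positivity
  have hA : ‖t‖ * (‖y‖ ^ 2 + c) ≤ 2 * ⟪t, y⟫ := by
    have := mul_le_mul_of_nonneg_left hty hT.le
    field_simp at this
    linarith
  have hA_sq : (‖t‖ * (‖y‖ ^ 2 + c)) ^ 2 ≤ 4 * ⟪t, y⟫ ^ 2 := by
    nlinarith [mul_nonneg hT.le (add_nonneg hβ.le hc)]
  have hkey : ‖y‖ ^ 2 * ‖y‖ ^ 2 + c * ‖t‖ ^ 2 * ‖y‖ ^ 2 ≤ 4 * ⟪t, y⟫ ^ 2 := by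
    nlinarith [one_le_pow₀ (n := 2) ht, mul_nonneg hc hβ.le, sq_nonneg c]
  rw [← sub_nonneg]
  have hfrac : (1 - c / 4) * ‖t‖ ^ 2 - (‖t‖ ^ 2 - ⟪t, y⟫ ^ 2 / ‖y‖ ^ 2 + ‖y‖ ^ 2 / 4)
      = (4 * ⟪t, y⟫ ^ 2 - (‖y‖ ^ 2 * ‖y‖ ^ 2 + c * ‖t‖ ^ 2 * ‖y‖ ^ 2)) / (4 * ‖y‖ ^ 2) := by
    field_simp
    ring
  rw [hfrac]
  exact div_nonneg (by linarith) (by positivity)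

theorem exists_integer_multiple_general (n : ℕ)
    (t y : EuclideanSpace ℝ (Fin n)) (ht : 1 ≤ ‖t‖)
    (hty : ‖‖t‖⁻¹ • t - y‖ ^ 2 ≤ 1 - 4 / (n : ℝ) ^ 2) :
    ∃ k : ℤ, ‖t - (k : ℝ) • y‖ ^ 2 ≤ (1 - 1 / (n : ℝ) ^ 2) * ‖t‖ ^ 2 := by
  have h := exists_int_norm_sub_smul_sq_le_of_norm_inv_norm_smul_sub_sq_le (by positivity) ht hty
  rwa [div_div_cancel_left' four_ne_zero, ← one_div] at h

/-- If `‖t‖ ≥ 1` and `‖t/‖t‖ − y‖² ≤ 1 − 4/n²`, then there is an integer `k` with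
`‖t − k·y‖² ≤ (1 − 1/n²)·‖t‖²`. -/
theorem exists_integer_multiple (n : ℕ) (hn : 1 ≤ n)
    (t y : EuclideanSpace ℝ (Fin n)) (ht : 1 ≤ ‖t‖)
    (hty : ‖‖t‖⁻¹ • t - y‖ ^ 2 ≤ 1 - 4 / (n : ℝ) ^ 2) :
    ∃ k : ℤ, ‖t - (k : ℝ) • y‖ ^ 2 ≤ (1 - 1 / (n : ℝ) ^ 2) * ‖t‖ ^ 2 :=
  exists_integer_multiple_general n t y ht hty
end
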